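/- If Ω ⊆ ℂ is open and G ⊆ Ω has connected complement (ℂ ∪ {∞}) \ G in the Riemann sphere, then (Ω ∪ {α}) \ G is connected in the one point compactification of Ω. -/

import Mathlib

open Topology Filter Set

noncomputable section

/-- The complement of (the image of) `V ⊆ ℂ` in the Riemann sphere `ℂ ∪ {∞}`. -/
def sphereCompl (V : Set ℂ) : Set (OnePoint ℂ) := (OnePoint.some '' V)ᶜ

/-- The complement `(Ω ∪ {α}) \ F` in the one point compactification of `Ω`. -/
def ocCompl (Ω F : Set ℂ) : Set (OnePoint Ω) :=
  (OnePoint.some '' {x : Ω | (x : ℂ) ∈ F})ᶜ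

/-- `S` is locally connected at the point `a`. -/
def LocConnAt {X : Type*} [TopologicalSpace X] (S : Set X) (a : X) : Prop :=
  ∀ U ∈ 𝓝 a, ∃ W ∈ 𝓝 a, W ⊆ U ∧ IsConnected (W ∩ S)

/-- `F` is a relatively closed subset of `Ω`. -/
def RelClosed (Ω F : Set ℂ) : Prop :=
  F ⊆ Ω ∧ IsClosed ((fun x : Ω => (x : ℂ)) ⁻¹' F)

/-- `B` is a hole of `E` in `Ω`: a connected component of `Ω \ E` contained in a
compact subset of `Ω`. -/
def IsHole (Ω E B : Set ℂ) : Prop :=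
  (∃ x ∈ Ω \ E, B = connectedComponentIn (Ω \ E) x) ∧
  ∃ K : Set ℂ, IsCompact K ∧ K ⊆ Ω ∧ B ⊆ K

/-- The union of all holes of `E` in `Ω`. -/
def holesUnion (Ω E : Set ℂ) : Set ℂ := ⋃₀ {B | IsHole Ω E B}

/-- `F` is an Arakelian set in `Ω`: relatively closed, with `(Ω ∪ {α}) \ F`
connected and locally connected at `α`. -/
def ArakelianIn (Ω F : Set ℂ) : Prop :=
  RelClosed Ω F ∧ IsConnected (ocCompl Ω F) ∧ LocConnAt (ocCompl Ω F) OnePoint.infty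

namespace OnePoint

variable {X : Type*} {U : Set X}

open Classical in
/-- The quotient map `φ` sending every point outside `U` to `∞`. -/
def collapse (U : Set X) : OnePoint X → OnePoint U :=
  fun z => z.elim ∞ fun x => if h : x ∈ U then some ⟨x, h⟩ else ∞

@[simp] lemma collapse_infty : collapse U ∞ = ∞ := rfl

lemma collapse_coe_of_mem {x : X} (h : x ∈ U) : collapse U x = some ⟨x, h⟩ := by
  simp [collapse, h]

lemma collapse_coe_of_notMem {x : X} (h : x ∉ U) : collapse U x = ∞ := by
  simp [collapse, h]

lemma preimage_collapse_image_coe (A : Set U) :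
    collapse U ⁻¹' (some '' A) = some '' (Subtype.val '' A) := by
  ext z
  induction z using OnePoint.rec with
  | infty => simp
  | coe x =>
    by_cases hx : x ∈ U
    · simp [collapse_coe_of_mem hx, coe_injective.mem_set_image, hx]
    · simp [collapse_coe_of_notMem hx, coe_injective.mem_set_image, hx]

lemma image_coe_preimage_coe_of_infty_notMem {s : Set (OnePoint X)} (h : ∞ ∉ s) :
    some '' (some ⁻¹' s) = s :=
  image_preimage_eq_of_subset fun z hz => by
    induction z using OnePoint.rec with
    | infty => exact absurd hz h
    | coe x => exact mem_range_self x

lemma collapse_image_compl_image_coe (F : Set X) :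
    collapse U '' (some '' F)ᶜ = (some '' (Subtype.val ⁻¹' F : Set U))ᶜ := by
  refine Subset.antisymm ?_ fun y hy => ?_
  · rintro _ ⟨z, hz, rfl⟩ hzF
    rw [← mem_preimage, preimage_collapse_image_coe] at hzF
    exact hz (image_mono (image_preimage_subset _ _) hzF)
  · induction y using OnePoint.rec with
    | infty => exact ⟨∞, infty_notMem_image_coe, rfl⟩
    | coe u =>
      refine ⟨u.1, fun hu => hy ?_, collapse_coe_of_mem u.2⟩
      simpa [coe_injective.mem_set_image] using hu

variable [TopologicalSpace X]

theorem continuous_collapse [T2Space X] (hU : IsOpen U) : Continuous (collapse U) := by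
  refine continuous_def.2 fun s hs => ?_
  by_cases h : ∞ ∈ s
  · have hK : IsCompact (Subtype.val '' (some ⁻¹' sᶜ : Set U)) :=
      ((isOpen_iff_of_mem h).1 hs).2.image continuous_subtype_val
    rw [← compl_compl s, ← image_coe_preimage_coe_of_infty_notMem (s := sᶜ) fun h' => h' h,
      preimage_compl, preimage_collapse_image_coe]
    exact isOpen_compl_image_coe.2 ⟨hK.isClosed, hK⟩
  · rw [← image_coe_preimage_coe_of_infty_notMem h, preimage_collapse_image_coe]
    exact isOpen_image_coe.2 (hU.isOpenMap_subtype_val _ ((isOpen_iff_of_notMem h).1 hs))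

end OnePoint

theorem stmt9_general (Ω G : Set ℂ) (hΩ : IsOpen Ω)
    (h : IsConnected (sphereCompl G)) :
    IsConnected (ocCompl Ω G) := by
  have himage : OnePoint.collapse Ω '' sphereCompl G = ocCompl Ω G :=
    OnePoint.collapse_image_compl_image_coe G
  exact himage ▸ h.image _ (OnePoint.continuous_collapse hΩ).continuousOn

theorem stmt9 (Ω G : Set ℂ) (hΩ : IsOpen Ω) (hG : G ⊆ Ω)
    (h : IsConnected (sphereCompl G)) :
    IsConnected (ocCompl Ω G) :=
  stmt9_general Ω G hΩ h
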